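/- If H is a convex subgraph of a graph G and X is a dual mutual-visibility set of G, then X ∩ V(H) is a dual mutual-visibility set of H. -/

import Mathlib

open SimpleGraph

variable {V : Type*}

/-- Vertices `u` and `v` are `X`-visible in `G`: some shortest `u,v`-walk has
no internal vertex in `X`. -/
def XVisible (G : SimpleGraph V) (X : Set V) (u v : V) : Prop :=
  ∃ p : G.Walk u v, p.length = G.dist u v ∧
    ∀ w ∈ p.support, w ≠ u → w ≠ v → w ∉ X

/-- `X` is a mutual-visibility set of `G`. -/
def MutualVis (G : SimpleGraph V) (X : Set V) : Prop :=
  ∀ ⦃u⦄, u ∈ X → ∀ ⦃v⦄, v ∈ X → XVisible G X u v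

/-- `X` is a total mutual-visibility set of `G`. -/
def TotalVis (G : SimpleGraph V) (X : Set V) : Prop :=
  ∀ u v : V, XVisible G X u v

/-- `X` is a dual mutual-visibility set of `G`. -/
def DualVis (G : SimpleGraph V) (X : Set V) : Prop :=
  MutualVis G X ∧ ∀ ⦃u⦄, u ∉ X → ∀ ⦃v⦄, v ∉ X → XVisible G X u v

/-- `X` is an outer mutual-visibility set of `G`. -/
def OuterVis (G : SimpleGraph V) (X : Set V) : Prop :=
  MutualVis G X ∧ ∀ ⦃u⦄, u ∈ X → ∀ ⦃v⦄, v ∉ X → XVisible G X u v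

/-- `S` induces a convex subgraph of `G`. -/
def IsConvexSet (G : SimpleGraph V) (S : Set V) : Prop :=
  ∀ u ∈ S, ∀ v ∈ S, ∀ p : G.Walk u v, p.length = G.dist u v →
    ∀ w ∈ p.support, w ∈ S

/-- The cycle graph on `ZMod n`. -/
def cyc (n : ℕ) : SimpleGraph (ZMod n) :=
  SimpleGraph.fromRel (fun u v => u - v = 1)

/-! A shortest walk of `G` between two vertices of a convex set `S` stays in `S`, so it lifts to
`G[S]`. Distances in `G[S]` are at least those in `G`, so the lift is again shortest, and it has
the same internal vertices, which is all that visibility asks for. -/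

namespace SimpleGraph

variable {W : Type*} {G : SimpleGraph V} {G' : SimpleGraph W}

theorem Hom.dist_le (f : G →g G') {u v : V} (h : G.Reachable u v) :
    G'.dist (f u) (f v) ≤ G.dist u v := by
  obtain ⟨p, hp⟩ := h.exists_walk_length_eq_dist
  simpa [hp] using SimpleGraph.dist_le (p.map f)

theorem Walk.length_eq_dist_of_length_map_eq_dist (f : G →g G') {u v : V} (q : G.Walk u v)
    (hq : (q.map f).length = G'.dist (f u) (f v)) : q.length = G.dist u v := by
  rw [Walk.length_map] at hq
  exact (hq.trans_le (f.dist_le ⟨q⟩)).antisymm (SimpleGraph.dist_le q)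

end SimpleGraph

theorem XVisible.induce {G : SimpleGraph V} {S X : Set V} (hS : IsConvexSet G S) {u v : S}
    (h : XVisible G X u v) : XVisible (G.induce S) (Subtype.val ⁻¹' X) u v := by
  obtain ⟨p, hp, hpX⟩ := h
  have hpS : ∀ w ∈ p.support, w ∈ S := hS u u.2 v v.2 p hp
  refine ⟨p.induce S hpS, ?_, ?_⟩
  · refine Walk.length_eq_dist_of_length_map_eq_dist (Embedding.induce S).toHom _ ?_
    rwa [Walk.map_induce]
  · intro w hw hwu hwv
    rw [Walk.support_induce, List.mem_attachWith] at hw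
    exact hpX w hw (Subtype.coe_injective.ne hwu) (Subtype.coe_injective.ne hwv)

theorem stmt_5 (G : SimpleGraph V) (S : Set V) (hS : IsConvexSet G S)
    (X : Set V) (hX : DualVis G X) :
    DualVis (G.induce S) (Subtype.val ⁻¹' X : Set S) :=
  ⟨fun _ hu _ hv => (hX.1 hu hv).induce hS, fun _ hu _ hv => (hX.2 hu hv).induce hS⟩
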